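/- arXiv:2403.04902 — 2 statements merged into one kernel-verified Lean document; each statement's English description precedes it below -/
import Mathlib

section
/- If a simple connected graph G on m vertices has a signable Moore-Penrose pseudo-inverse, then the weighted pseudo-inverse graph G† is also connected. -/
/-!
If `D A† D` had a zero off-diagonal block for a cut `(S, Sᶜ)`, then, `A†` being symmetric, `A†`
would commute with the sign flip `U` of `S`. Since `U A U` has Moore-Penrose inverse `U A† U = A†`,
uniqueness of the Moore-Penrose inverse forces `U A U = A`, i.e. `A` has no edge across the cut,
contradicting connectedness of `G`.
-/

open Matrix

/-- The four Moore-Penrose (Penrose) axioms for a real matrix `K` and candidate inverse `K'`. -/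
def IsMoorePenrose {α β : Type*} [Fintype α] [Fintype β]
    (K : Matrix α β ℝ) (K' : Matrix β α ℝ) : Prop :=
  (K * K')ᵀ = K * K' ∧ (K' * K)ᵀ = K' * K ∧ K * K' * K = K ∧ K' * K * K' = K'

/-- Diagonal entries of a ±1 signature matrix. -/
def IsSign {α : Type*} (d : α → ℝ) : Prop := ∀ i, d i = 1 ∨ d i = -1

/-- Irreducibility of a real square matrix (connectedness of the weighted graph it defines). -/
def MatIrreducible {m : ℕ} (M : Matrix (Fin m) (Fin m) ℝ) : Prop :=
  ∀ S : Finset (Fin m), S.Nonempty → S ≠ Finset.univ → ∃ i ∈ S, ∃ j ∈ Sᶜ, M i j ≠ 0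

namespace IsMoorePenrose

section Rectangular

variable {α β : Type*} [Fintype α] [Fintype β] {K : Matrix α β ℝ} {K' : Matrix β α ℝ}

theorem symm (h : IsMoorePenrose K K') : IsMoorePenrose K' K :=
  ⟨h.2.1, h.1, h.2.2.2, h.2.2.1⟩

theorem transpose (h : IsMoorePenrose K K') : IsMoorePenrose Kᵀ K'ᵀ := by
  obtain ⟨h₁, h₂, h₃, h₄⟩ := h
  refine ⟨?_, ?_, ?_, ?_⟩
  · rw [← transpose_mul, transpose_transpose, h₂]
  · rw [← transpose_mul, transpose_transpose, h₁]
  · rw [← transpose_mul, ← transpose_mul, ← Matrix.mul_assoc, h₃]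
  · rw [← transpose_mul, ← transpose_mul, ← Matrix.mul_assoc, h₄]

theorem unique {K₁ K₂ : Matrix β α ℝ} (h₁ : IsMoorePenrose K K₁) (h₂ : IsMoorePenrose K K₂) :
    K₁ = K₂ := by
  obtain ⟨h₁l, h₁r, h₁K, h₁K'⟩ := h₁
  obtain ⟨h₂l, h₂r, h₂K, h₂K'⟩ := h₂
  have hl : K * K₁ = K * K₂ :=
    calc K * K₁ = (K * K₂) * (K * K₁) := by rw [← Matrix.mul_assoc, h₂K]
    _ = (K * K₂)ᵀ * (K * K₁)ᵀ := by rw [h₂l, h₁l]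
    _ = (K * K₁ * K * K₂)ᵀ := by simp only [transpose_mul, Matrix.mul_assoc]
    _ = K * K₂ := by rw [h₁K, h₂l]
  have hr : K₁ * K = K₂ * K :=
    calc K₁ * K = (K₁ * K) * (K₂ * K) := by rw [Matrix.mul_assoc, ← Matrix.mul_assoc K, h₂K]
    _ = (K₁ * K)ᵀ * (K₂ * K)ᵀ := by rw [h₁r, h₂r]
    _ = (K₂ * (K * K₁ * K))ᵀ := by simp only [transpose_mul, Matrix.mul_assoc]
    _ = K₂ * K := by rw [h₁K, h₂r]
  calc K₁ = K₁ * K * K₁ := h₁K'.symm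
  _ = K₂ * (K * K₂) := by rw [hr, Matrix.mul_assoc, hl]
  _ = K₂ := by rw [← Matrix.mul_assoc, h₂K']

variable [DecidableEq α] [DecidableEq β]

private theorem sandwich_mul_sandwich {γ : Type*} [Fintype γ] [DecidableEq γ] {u : α → ℝ}
    {v : β → ℝ} {w : γ → ℝ} (hv : v * v = 1) (X : Matrix α β ℝ) (Y : Matrix β γ ℝ) :
    diagonal u * X * diagonal v * (diagonal v * Y * diagonal w) =
      diagonal u * (X * Y) * diagonal w := by
  have hvv : diagonal v * diagonal v = 1 := by
    rw [diagonal_mul_diagonal', ← diagonal_one']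
    exact congrArg diagonal hv
  simp only [Matrix.mul_assoc]
  rw [← Matrix.mul_assoc (diagonal v) (diagonal v), hvv, Matrix.one_mul]

theorem diagonal_mul_mul_diagonal {u : α → ℝ} {v : β → ℝ} (hu : u * u = 1) (hv : v * v = 1)
    (h : IsMoorePenrose K K') :
    IsMoorePenrose (diagonal u * K * diagonal v) (diagonal v * K' * diagonal u) := by
  obtain ⟨h₁, h₂, h₃, h₄⟩ := h
  refine ⟨?_, ?_, ?_, ?_⟩
  · rw [sandwich_mul_sandwich hv K K', transpose_mul, transpose_mul, diagonal_transpose, h₁,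
      ← Matrix.mul_assoc]
  · rw [sandwich_mul_sandwich hu K' K, transpose_mul, transpose_mul, diagonal_transpose, h₂,
      ← Matrix.mul_assoc]
  · rw [sandwich_mul_sandwich hv K K', sandwich_mul_sandwich hu (K * K') K, h₃]
  · rw [sandwich_mul_sandwich hu K' K, sandwich_mul_sandwich hv (K' * K) K', h₄]

end Rectangular

section Square

variable {α : Type*} [Fintype α] {K K' : Matrix α α ℝ}

theorem isSymm (h : IsMoorePenrose K K') (hK : K.IsSymm) : K'.IsSymm :=
  unique (hK.eq ▸ h.transpose) h

theorem apply_eq_zero_of_inverse_apply_eq_zero [DecidableEq α] (h : IsMoorePenrose K K')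
    (S : Finset α) (hK' : ∀ i ∈ S, ∀ j ∉ S, K' i j = 0 ∧ K' j i = 0) :
    ∀ i ∈ S, ∀ j ∉ S, K i j = 0 := by
  set u : α → ℝ := fun i => if i ∈ S then -1 else 1 with hu_def
  have hu : u * u = 1 := by
    funext i; simp only [hu_def, Pi.mul_apply, Pi.one_apply]; split_ifs <;> norm_num
  have hconj : ∀ M : Matrix α α ℝ, ∀ i j, (diagonal u * M * diagonal u) i j = u i * M i j * u j :=
    fun M i j => by rw [mul_diagonal, diagonal_mul]
  have hUK'U : diagonal u * K' * diagonal u = K' := by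
    ext i j
    rw [hconj]
    by_cases hi : i ∈ S <;> by_cases hj : j ∈ S
    · simp [hu_def, hi, hj]
    · simp [(hK' i hi j hj).1]
    · simp [(hK' j hj i hi).2]
    · simp [hu_def, hi, hj]
  have hUKU : diagonal u * K * diagonal u = K :=
    unique (hUK'U ▸ h.symm.diagonal_mul_mul_diagonal hu hu) h.symm
  intro i hi j hj
  have hij := congrFun (congrFun hUKU i) j
  rw [hconj] at hij
  simp only [hu_def, hi, hj, if_true, if_false] at hij
  linarith

end Square

end IsMoorePenrose

theorem IsSign.ne_zero {α : Type*} {d : α → ℝ} (hd : IsSign d) (i : α) : d i ≠ 0 := by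
  rcases hd i with h | h <;> norm_num [h]

theorem matIrreducible_iff {m : ℕ} {M : Matrix (Fin m) (Fin m) ℝ} :
    MatIrreducible M ↔
      ∀ S : Finset (Fin m), S.Nonempty → S ≠ Finset.univ → ∃ i ∈ S, ∃ j ∉ S, M i j ≠ 0 := by
  simp only [MatIrreducible, Finset.mem_compl]

theorem matIrreducible_neg {m : ℕ} {M : Matrix (Fin m) (Fin m) ℝ} :
    MatIrreducible (-M) ↔ MatIrreducible M := by
  simp only [MatIrreducible, Matrix.neg_apply, neg_ne_zero]

theorem matIrreducible_diagonal_mul_mul_diagonal {m : ℕ} {M : Matrix (Fin m) (Fin m) ℝ}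
    {d : Fin m → ℝ} (hd : ∀ i, d i ≠ 0) :
    MatIrreducible (diagonal d * M * diagonal d) ↔ MatIrreducible M := by
  simp only [MatIrreducible, mul_diagonal, diagonal_mul, ne_eq, mul_eq_zero, hd, or_false,
    false_or]

theorem SimpleGraph.Connected.matIrreducible_adjMatrix {m : ℕ} {G : SimpleGraph (Fin m)}
    [DecidableRel G.Adj] (hG : G.Connected) : MatIrreducible (G.adjMatrix ℝ) := by
  intro S ⟨i, hi⟩ hS
  obtain ⟨j, hj⟩ : ∃ j, j ∉ S := by simpa [Finset.eq_univ_iff_forall] using hS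
  obtain ⟨e, -, he, he'⟩ := (hG.preconnected i j).some.exists_boundary_dart (↑S) hi hj
  exact ⟨e.fst, he, e.snd, Finset.mem_compl.2 he', by simp [e.adj]⟩

theorem IsMoorePenrose.matIrreducible {m : ℕ} {K K' : Matrix (Fin m) (Fin m) ℝ}
    (h : IsMoorePenrose K K') (hsymm : K.IsSymm) (hK : MatIrreducible K) :
    MatIrreducible K' := by
  rw [matIrreducible_iff] at hK ⊢
  intro S hS hSu
  by_contra! hK'
  have hK'block : ∀ i ∈ S, ∀ j ∉ S, K' i j = 0 ∧ K' j i = 0 := fun i hi j hj =>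
    ⟨hK' i hi j hj, (h.isSymm hsymm).apply j i ▸ hK' i hi j hj⟩
  obtain ⟨i, hi, j, hj, hij⟩ := hK S hS hSu
  exact hij (h.apply_eq_zero_of_inverse_apply_eq_zero S hK'block i hi j hj)

/-- If a simple connected graph has a signable Moore-Penrose pseudo-inverse, the weighted
pseudo-inverse graph (adjacency `D A† D`, resp. `−D A† D`) is connected (irreducible). -/
theorem stmt_3 {m : ℕ} (G : SimpleGraph (Fin m)) [DecidableRel G.Adj]
    (hconn : G.Connected) (A' : Matrix (Fin m) (Fin m) ℝ) (d : Fin m → ℝ)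
    (hMP : IsMoorePenrose (G.adjMatrix ℝ) A') (hd : IsSign d) :
    ((∀ i j, 0 ≤ (Matrix.diagonal d * A' * Matrix.diagonal d) i j) →
      MatIrreducible (Matrix.diagonal d * A' * Matrix.diagonal d)) ∧
    ((∀ i j, (Matrix.diagonal d * A' * Matrix.diagonal d) i j ≤ 0) →
      MatIrreducible (-(Matrix.diagonal d * A' * Matrix.diagonal d))) := by
  have hirr : MatIrreducible (diagonal d * A' * diagonal d) :=
    (matIrreducible_diagonal_mul_mul_diagonal hd.ne_zero).2 <|
      hMP.matIrreducible G.isSymm_adjMatrix hconn.matIrreducible_adjMatrix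
  exact ⟨fun _ => hirr, fun _ => matIrreducible_neg.2 hirr⟩
end

section
/- The cycle graph C_m of order m ≥ 3 with m ≠ 4 is neither positively nor negatively pseudo-invertible; i.e., there is no ±1 diagonal signature matrix D such that DA†D is entrywise nonnegative or entrywise nonpositive, where A is the adjacency matrix of C_m. -/
/-!
The Moore–Penrose inverse `X` of the adjacency matrix `A` of `C_m` is unique, so it inherits the
symmetries of `A`: it is symmetric and invariant under rotations of the cycle. Hence `P = A X` is
a rotation-invariant idempotent whose diagonal entry `p` satisfies `m p = tr P = rank A`, and the
identities `A X = P`, `P A = A` give `X 1 0 = p / 2` and `X 3 0 = 1 - 3 p / 2`. A kernel vector of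
`A` satisfies `x (k + 2) = -x k`, so the kernel has dimension at most `2` and is trivial unless
`4 ∣ m`; thus `3 rank A > 2 m` when `m ≠ 4`, i.e. `X 1 0 > 0 > X 3 0`. Conjugation by a signature
matrix does not change the product `X 0 1 * X 1 2 * X 2 3 * X 3 0 = (X 1 0) ^ 3 * X 3 0 < 0` along
the closed walk `0, 1, 2, 3, 0`, so `D X D` cannot have constant sign.
-/

open Matrix

namespace IsMoorePenrose

variable {α β : Type*} [Fintype α] [Fintype β] {A : Matrix α β ℝ} {X Y : Matrix β α ℝ}

theorem unique_s5 (hX : IsMoorePenrose A X) (hY : IsMoorePenrose A Y) : X = Y := by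
  obtain ⟨hX₁, hX₂, hX₃, hX₄⟩ := hX
  obtain ⟨hY₁, hY₂, hY₃, hY₄⟩ := hY
  have hXA : X * A = Y * A :=
    calc X * A = (X * (A * Y * A))ᵀ := by rw [hY₃, hX₂]
      _ = (Y * A)ᵀ * (X * A)ᵀ := by simp only [← transpose_mul, Matrix.mul_assoc]
      _ = Y * (A * X * A) := by simp only [hY₂, hX₂, Matrix.mul_assoc]
      _ = Y * A := by rw [hX₃]
  have hAX : A * X = A * Y :=
    calc A * X = ((A * Y * A) * X)ᵀ := by rw [hY₃, hX₁]
      _ = (A * X)ᵀ * (A * Y)ᵀ := by simp only [← transpose_mul, Matrix.mul_assoc]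
      _ = A * X * A * Y := by simp only [hY₁, hX₁, Matrix.mul_assoc]
      _ = A * Y := by rw [hX₃]
  calc X = X * A * X := hX₄.symm
    _ = Y * (A * Y) := by rw [hXA, Matrix.mul_assoc, hAX]
    _ = Y := by rw [← Matrix.mul_assoc, hY₄]

theorem transpose_s5 (h : IsMoorePenrose A X) : IsMoorePenrose Aᵀ Xᵀ := by
  obtain ⟨h₁, h₂, h₃, h₄⟩ := h
  refine ⟨?_, ?_, ?_, ?_⟩
  · rw [← transpose_mul, transpose_transpose, h₂]
  · rw [← transpose_mul, transpose_transpose, h₁]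
  · rw [← transpose_mul, ← transpose_mul, ← Matrix.mul_assoc, h₃]
  · rw [← transpose_mul, ← transpose_mul, ← Matrix.mul_assoc, h₄]

theorem submatrix {γ δ : Type*} [Fintype γ] [Fintype δ] (h : IsMoorePenrose A X)
    (e : γ ≃ α) (f : δ ≃ β) : IsMoorePenrose (A.submatrix e f) (X.submatrix f e) := by
  obtain ⟨h₁, h₂, h₃, h₄⟩ := h
  simp only [IsMoorePenrose, submatrix_mul_equiv, transpose_submatrix, h₁, h₂, h₃, h₄, and_self]

theorem submatrix_eq {e : α ≃ α} {f : β ≃ β} (h : IsMoorePenrose A X)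
    (hA : A.submatrix e f = A) : X.submatrix f e = X :=
  (hA ▸ h.submatrix e f : IsMoorePenrose A _).unique_s5 h

theorem transpose_eq {A X : Matrix α α ℝ} (h : IsMoorePenrose A X) (hA : Aᵀ = A) : Xᵀ = X :=
  (hA ▸ h.transpose_s5 : IsMoorePenrose A _).unique_s5 h

theorem isIdempotentElem_mul (h : IsMoorePenrose A X) : IsIdempotentElem (A * X) := by
  rw [IsIdempotentElem, ← Matrix.mul_assoc, h.2.2.1]

theorem rank_mul (h : IsMoorePenrose A X) : (A * X).rank = A.rank :=
  le_antisymm (rank_mul_le_left A X) <|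
    calc A.rank = (A * X * A).rank := by rw [h.2.2.1]
      _ ≤ (A * X).rank := rank_mul_le_left _ _

end IsMoorePenrose

theorem Matrix.trace_eq_rank_of_isIdempotentElem {n K : Type*} [Fintype n] [DecidableEq n]
    [Field K] {P : Matrix n n K} (hP : IsIdempotentElem P) : P.trace = P.rank := by
  have hlin : IsIdempotentElem (toLin' P) := hP.map toLinAlgEquiv'
  rw [← trace_toLin'_eq, ((LinearMap.isProj_range_iff_isIdempotentElem _).mpr hlin).trace]
  rfl

theorem IsSign.mul_self {α : Type*} {d : α → ℝ} (hd : IsSign d) (i : α) : d i * d i = 1 := by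
  rcases hd i with h | h <;> simp [h]

theorem IsSign.cycle_product_nonneg {α : Type*} [Fintype α] [DecidableEq α] {d : α → ℝ}
    (hd : IsSign d) {M : Matrix α α ℝ}
    (h : (∀ i j, 0 ≤ (diagonal d * M * diagonal d) i j) ∨
      (∀ i j, (diagonal d * M * diagonal d) i j ≤ 0)) (a b c e : α) :
    0 ≤ M a b * M b c * M c e * M e a := by
  set N := diagonal d * M * diagonal d
  have hN : ∀ i j, N i j = d i * M i j * d j := fun i j => by
    simp only [N, mul_diagonal, diagonal_mul]
  have hprod : N a b * N b c * (N c e * N e a) = M a b * M b c * M c e * M e a := by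
    calc N a b * N b c * (N c e * N e a)
        = (d a * d a) * (d b * d b) * (d c * d c) * (d e * d e) *
            (M a b * M b c * M c e * M e a) := by simp only [hN]; ring
      _ = M a b * M b c * M c e * M e a := by simp only [hd.mul_self]; ring
  rw [← hprod]
  rcases h with h | h
  · exact mul_nonneg (mul_nonneg (h a b) (h b c)) (mul_nonneg (h c e) (h e a))
  · exact mul_nonneg (mul_nonneg_of_nonpos_of_nonpos (h a b) (h b c))
      (mul_nonneg_of_nonpos_of_nonpos (h c e) (h e a))

def cycleAdj (m : ℕ) : Matrix (ZMod m) (ZMod m) ℝ :=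
  of fun i j => if i - j = 1 ∨ j - i = 1 then 1 else 0

section cycleAdj

variable {m : ℕ}

theorem cycleAdj_transpose : (cycleAdj m)ᵀ = cycleAdj m := by
  ext i j
  simp only [cycleAdj, transpose_apply, of_apply, or_comm]

theorem cycleAdj_submatrix_addRight (k : ZMod m) :
    (cycleAdj m).submatrix (Equiv.addRight k) (Equiv.addRight k) = cycleAdj m := by
  ext i j
  simp only [cycleAdj, submatrix_apply, Equiv.coe_addRight, of_apply, add_sub_add_right_eq_sub]

theorem ZMod.sub_one_ne_add_one (hm : 3 ≤ m) (i : ZMod m) : i - 1 ≠ i + 1 := by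
  intro h
  have h2 : ((2 : ℕ) : ZMod m) = 0 := by push_cast; linear_combination -h
  rw [ZMod.natCast_eq_zero_iff] at h2
  exact absurd (Nat.le_of_dvd two_pos h2) (by omega)

variable [NeZero m]

theorem cycleAdj_mulVec_apply (hm : 3 ≤ m) (x : ZMod m → ℝ) (i : ZMod m) :
    (cycleAdj m *ᵥ x) i = x (i - 1) + x (i + 1) := by
  have hterm : ∀ k, cycleAdj m i k * x k =
      (if k = i - 1 then x k else 0) + (if k = i + 1 then x k else 0) := by
    intro k
    have hne := ZMod.sub_one_ne_add_one hm i
    by_cases h₁ : k = i - 1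
    · simp [cycleAdj, h₁, hne]
    by_cases h₂ : k = i + 1
    · simp [cycleAdj, h₂, hne.symm]
    have : ¬(i - k = 1 ∨ k - i = 1) := by grind
    simp [cycleAdj, h₁, h₂, this]
  simp only [mulVec, dotProduct, hterm, Finset.sum_add_distrib, Finset.sum_ite_eq',
    Finset.mem_univ, if_true]

theorem cycleAdj_mul_apply (hm : 3 ≤ m) (M : Matrix (ZMod m) (ZMod m) ℝ) (i j : ZMod m) :
    (cycleAdj m * M) i j = M (i - 1) j + M (i + 1) j :=
  cycleAdj_mulVec_apply hm (fun k => M k j) i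

theorem mul_cycleAdj_apply (hm : 3 ≤ m) (M : Matrix (ZMod m) (ZMod m) ℝ) (i j : ZMod m) :
    (M * cycleAdj m) i j = M i (j - 1) + M i (j + 1) := by
  rw [← transpose_apply (M * cycleAdj m), transpose_mul, cycleAdj_transpose, cycleAdj_mul_apply hm]
  rfl

end cycleAdj

section cycleAdjKernel

variable {m : ℕ} [NeZero m] {x : ZMod m → ℝ}

theorem apply_add_two_of_cycleAdj_mulVec_eq_zero (hm : 3 ≤ m) (hx : cycleAdj m *ᵥ x = 0)
    (k : ZMod m) : x (k + 2) = -x k := by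
  have h := congrFun hx (k + 1)
  rw [cycleAdj_mulVec_apply hm, add_sub_cancel_right, add_assoc, one_add_one_eq_two] at h
  simpa [eq_neg_iff_add_eq_zero, add_comm] using h

theorem apply_add_two_mul_of_cycleAdj_mulVec_eq_zero (hm : 3 ≤ m) (hx : cycleAdj m *ᵥ x = 0)
    (k : ZMod m) (j : ℕ) : x (k + 2 * j) = (-1) ^ j * x k := by
  induction j with
  | zero => simp
  | succ j ih =>
    rw [Nat.cast_succ, mul_add_one, ← add_assoc, apply_add_two_of_cycleAdj_mulVec_eq_zero hm hx,
      ih, pow_succ]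
    ring

theorem eq_zero_of_cycleAdj_mulVec_eq_zero (hm : 3 ≤ m) (hx : cycleAdj m *ᵥ x = 0)
    (h₀ : x 0 = 0) (h₁ : x 1 = 0) : x = 0 := by
  funext k
  have hk : k = ((k.val % 2 : ℕ) : ZMod m) + 2 * ((k.val / 2 : ℕ) : ZMod m) := by
    conv_lhs => rw [← ZMod.natCast_zmod_val k, ← Nat.mod_add_div k.val 2]
    push_cast
    rfl
  rw [hk, apply_add_two_mul_of_cycleAdj_mulVec_eq_zero hm hx]
  rcases Nat.mod_two_eq_zero_or_one k.val with h | h <;> simp [h, h₀, h₁]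

theorem eq_zero_of_cycleAdj_mulVec_eq_zero_of_not_dvd (hm : 3 ≤ m) (h4 : ¬4 ∣ m)
    (hx : cycleAdj m *ᵥ x = 0) : x = 0 := by
  obtain ⟨h, hodd, hdvd⟩ : ∃ h, Odd h ∧ m ∣ 2 * h := by
    rcases Nat.even_or_odd m with ⟨r, hr⟩ | hodd
    · refine ⟨r, Nat.odd_iff.mpr (by omega), ⟨1, by omega⟩⟩
    · exact ⟨m, hodd, dvd_mul_left m 2⟩
  have h2h : 2 * (h : ZMod m) = 0 := by
    rw [← Nat.cast_ofNat, ← Nat.cast_mul, ZMod.natCast_eq_zero_iff]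
    exact hdvd
  funext k
  have := apply_add_two_mul_of_cycleAdj_mulVec_eq_zero hm hx k h
  rw [h2h, add_zero, hodd.neg_one_pow] at this
  simp only [Pi.zero_apply]
  linarith

theorem finrank_ker_cycleAdj_le (hm : 3 ≤ m) :
    Module.finrank ℝ (LinearMap.ker (cycleAdj m).mulVecLin) ≤ 2 := by
  let restrict := (LinearMap.funLeft ℝ ℝ ![(0 : ZMod m), 1]).domRestrict
    (LinearMap.ker (cycleAdj m).mulVecLin)
  have hinj : Function.Injective restrict := by
    rw [← LinearMap.ker_eq_bot, LinearMap.ker_eq_bot']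
    rintro ⟨x, hx⟩ hx0
    have h₀ := congrFun hx0 0
    have h₁ := congrFun hx0 1
    simp only [restrict, LinearMap.domRestrict_apply, LinearMap.funLeft_apply] at h₀ h₁
    exact Subtype.ext (eq_zero_of_cycleAdj_mulVec_eq_zero hm hx h₀ h₁)
  simpa using LinearMap.finrank_le_finrank_of_injective hinj

theorem rank_cycleAdj_add_finrank_ker :
    (cycleAdj m).rank + Module.finrank ℝ (LinearMap.ker (cycleAdj m).mulVecLin) = m := by
  rw [rank, LinearMap.finrank_range_add_finrank_ker, Module.finrank_fintype_fun_eq_card,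
    ZMod.card]

theorem two_mul_lt_three_mul_rank_cycleAdj (hm : 3 ≤ m) (hne : m ≠ 4) :
    2 * m < 3 * (cycleAdj m).rank := by
  have hsum := rank_cycleAdj_add_finrank_ker (m := m)
  by_cases h4 : 4 ∣ m
  · have := finrank_ker_cycleAdj_le hm
    omega
  · have hker : LinearMap.ker (cycleAdj m).mulVecLin = ⊥ :=
      LinearMap.ker_eq_bot'.mpr fun x hx => eq_zero_of_cycleAdj_mulVec_eq_zero_of_not_dvd hm h4 hx
    rw [hker, finrank_bot] at hsum
    omega

end cycleAdjKernel

namespace IsMoorePenrose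

variable {m : ℕ} [NeZero m] {X : Matrix (ZMod m) (ZMod m) ℝ}

theorem cycleAdj_apply_add (hX : IsMoorePenrose (cycleAdj m) X) (i j k : ZMod m) :
    X (i + k) (j + k) = X i j :=
  congrFun (congrFun (hX.submatrix_eq (cycleAdj_submatrix_addRight k)) i) j

theorem cycleAdj_apply_comm (hX : IsMoorePenrose (cycleAdj m) X) (i j : ZMod m) :
    X j i = X i j :=
  congrFun (congrFun (hX.transpose_eq cycleAdj_transpose) i) j

theorem cycleAdj_apply_add_one (hX : IsMoorePenrose (cycleAdj m) X) (i : ZMod m) :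
    X i (i + 1) = X 1 0 := by
  rw [hX.cycleAdj_apply_comm, ← hX.cycleAdj_apply_add 1 0 i, zero_add, add_comm]

theorem cycleAdj_mul_apply_self (hX : IsMoorePenrose (cycleAdj m) X) (i : ZMod m) :
    (cycleAdj m * X) i i = (cycleAdj m * X) 0 0 := by
  have hP := congrFun (congrFun (submatrix_mul_equiv (cycleAdj m) X
    (Equiv.addRight i) (Equiv.addRight i) (Equiv.addRight i)) 0) 0
  rw [cycleAdj_submatrix_addRight, hX.submatrix_eq (cycleAdj_submatrix_addRight i)] at hP
  simpa using hP.symm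

theorem card_mul_cycleAdj_mul_apply_zero (hX : IsMoorePenrose (cycleAdj m) X) :
    (m : ℝ) * (cycleAdj m * X) 0 0 = (cycleAdj m).rank := by
  rw [← hX.rank_mul, ← trace_eq_rank_of_isIdempotentElem hX.isIdempotentElem_mul, trace]
  simp only [diag_apply, hX.cycleAdj_mul_apply_self, Finset.sum_const, Finset.card_univ,
    ZMod.card, nsmul_eq_mul]

theorem cycleAdj_mul_apply_zero (hm : 3 ≤ m) (hX : IsMoorePenrose (cycleAdj m) X) :
    (cycleAdj m * X) 0 0 = 2 * X 1 0 := by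
  rw [cycleAdj_mul_apply hm, zero_sub, zero_add, ← hX.cycleAdj_apply_add (-1) 0 1,
    neg_add_cancel, zero_add, hX.cycleAdj_apply_comm]
  ring

theorem cycleAdj_apply_three_zero (hm : 3 ≤ m) (hX : IsMoorePenrose (cycleAdj m) X) :
    X 3 0 = 1 - 3 * X 1 0 := by
  have hP : (cycleAdj m * X) 2 0 = X 1 0 + X 3 0 := by
    rw [cycleAdj_mul_apply hm]
    norm_num
  have hPA : (cycleAdj m * X * cycleAdj m) 2 1 = cycleAdj m 2 1 := by rw [hX.2.2.1]
  rw [mul_cycleAdj_apply hm, sub_self, one_add_one_eq_two, hX.cycleAdj_mul_apply_self,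
    hX.cycleAdj_mul_apply_zero hm, hP] at hPA
  have hA : cycleAdj m 2 1 = 1 := by simp [cycleAdj, show (2 : ZMod m) - 1 = 1 by ring]
  linarith

theorem two_mul_card_mul_cycleAdj_apply_one_zero (hm : 3 ≤ m)
    (hX : IsMoorePenrose (cycleAdj m) X) : 2 * m * X 1 0 = (cycleAdj m).rank := by
  rw [← hX.card_mul_cycleAdj_mul_apply_zero, hX.cycleAdj_mul_apply_zero hm]
  ring

theorem cycleAdj_apply_one_zero_pos (hm : 3 ≤ m) (hne : m ≠ 4)
    (hX : IsMoorePenrose (cycleAdj m) X) : 0 < X 1 0 := by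
  have hrank : (2 : ℝ) * m < 3 * (cycleAdj m).rank := by
    exact_mod_cast two_mul_lt_three_mul_rank_cycleAdj hm hne
  have := hX.two_mul_card_mul_cycleAdj_apply_one_zero hm
  nlinarith

theorem cycleAdj_apply_three_zero_neg (hm : 3 ≤ m) (hne : m ≠ 4)
    (hX : IsMoorePenrose (cycleAdj m) X) : X 3 0 < 0 := by
  have hrank : (2 : ℝ) * m < 3 * (cycleAdj m).rank := by
    exact_mod_cast two_mul_lt_three_mul_rank_cycleAdj hm hne
  have := hX.two_mul_card_mul_cycleAdj_apply_one_zero hm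
  rw [hX.cycleAdj_apply_three_zero hm]
  nlinarith

end IsMoorePenrose

/-- The cycle `C_m`, `m ≥ 3`, `m ≠ 4`, is neither positively nor negatively pseudo-invertible. -/
theorem stmt_5 (m : ℕ) [NeZero m] (hm : 3 ≤ m) (hne : m ≠ 4)
    (A A' : Matrix (ZMod m) (ZMod m) ℝ)
    (hA : ∀ i j, A i j = if i - j = 1 ∨ j - i = 1 then 1 else 0)
    (hMP : IsMoorePenrose A A') :
    ¬ ∃ d : ZMod m → ℝ, IsSign d ∧
        ((∀ i j, 0 ≤ (Matrix.diagonal d * A' * Matrix.diagonal d) i j) ∨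
         (∀ i j, (Matrix.diagonal d * A' * Matrix.diagonal d) i j ≤ 0)) := by
  rintro ⟨d, hd, hsign⟩
  obtain rfl : A = cycleAdj m := Matrix.ext hA
  have h01 : A' 0 1 = A' 1 0 := by simpa using hMP.cycleAdj_apply_add_one 0
  have h12 : A' 1 2 = A' 1 0 := by rw [← one_add_one_eq_two, hMP.cycleAdj_apply_add_one]
  have h23 : A' 2 3 = A' 1 0 := by rw [← two_add_one_eq_three, hMP.cycleAdj_apply_add_one]
  have hcycle := hd.cycle_product_nonneg hsign 0 1 2 3
  rw [h01, h12, h23] at hcycle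
  have hpos := hMP.cycleAdj_apply_one_zero_pos hm hne
  have hneg := hMP.cycleAdj_apply_three_zero_neg hm hne
  exact hcycle.not_gt (mul_neg_of_pos_of_neg (by positivity) hneg)
end
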